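/- arXiv:0812.4788 — 2 statements merged into one kernel-verified Lean document; each statement's English description precedes it below -/
import Mathlib

section
/- Let Ω ⊂ ℝ^N be bounded Lipschitz and 𝒯_ε the unfolding operator. Then for all u ∈ L¹(Ω̃_ε), ∫_Ω u dx differs from (1/|Y|)∫_{Ω×Y} 𝒯_ε(u) dx dy by at most ‖u‖_{L¹(Λ_ε)}, where Λ_ε = {x ∈ Ω̃_ε : dist(x, ∂Ω) < √N ε}; moreover exact unfolding holds on Ω̃_ε: ∫_Ω u dx = (1/|Y|) ∫_{Ω̃_ε × Y} 𝒯_ε(u) dx dy when u is extended by 0 outside Ω. -/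
noncomputable section
open MeasureTheory Filter Topology ENNReal

abbrev Euc (N : ℕ) := EuclideanSpace ℝ (Fin N)

/-- view a plain function as a point of Euclidean space -/
def vec {N : ℕ} (f : Fin N → ℝ) : Euc N := WithLp.toLp 2 f

/-- the open unit cell Y = (0,1)^N -/
def unitCell (N : ℕ) : Set (Euc N) := {y | ∀ i, y i ∈ Set.Ioo (0:ℝ) 1}

/-- Y-periodicity -/
def IsPeriodic {N : ℕ} (Φ : Euc N → ℝ) : Prop :=
  ∀ (k : Fin N → ℤ) (y : Euc N), Φ (y + vec (fun i => (k i : ℝ))) = Φ y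

/-- the ε-cell ε[x/ε] + εY containing x -/
def cell {N : ℕ} (ε : ℝ) (x : Euc N) : Set (Euc N) :=
  {y | ∀ i, y i ∈ Set.Ico (ε * (⌊x i / ε⌋ : ℝ)) (ε * (⌊x i / ε⌋ : ℝ) + ε)}

/-- M^ε_Y(ψ)(x): the mean of ψ over the ε-cell containing x -/
def cellAvg {N : ℕ} (ε : ℝ) (ψ : Euc N → ℝ) (x : Euc N) : ℝ :=
  (ε ^ N)⁻¹ * ∫ y in cell ε x, ψ y

/-- Ω̃_ε: the union of ε-cells meeting Ω -/
def bigCell {N : ℕ} (ε : ℝ) (Ω : Set (Euc N)) : Set (Euc N) :=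
  {x | (cell ε x ∩ Ω).Nonempty}

/-- square of the H¹ norm on a set -/
def H1sq {N : ℕ} (S : Set (Euc N)) (ψ : Euc N → ℝ) : ℝ :=
  ∫ x in S, (ψ x ^ 2 + ‖gradient ψ x‖ ^ 2)

/-- square of the H² norm on a set -/
def H2sq {N : ℕ} (S : Set (Euc N)) (ψ : Euc N → ℝ) : ℝ :=
  ∫ x in S, (ψ x ^ 2 + ‖gradient ψ x‖ ^ 2 + ‖iteratedFDeriv ℝ 2 ψ x‖ ^ 2)

/-- the periodic unfolding operator 𝒯_ε(φ)(x,y) = φ(ε[x/ε] + εy) -/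
def unfoldOp {N : ℕ} (ε : ℝ) (φ : Euc N → ℝ) (x y : Euc N) : ℝ :=
  φ (vec (fun i => ε * (⌊x i / ε⌋ : ℝ) + ε * y i))

/-- smooth test functions compactly supported in Ω (dense in H¹₀(Ω)) -/
def TestFn {N : ℕ} (Ω : Set (Euc N)) (ψ : Euc N → ℝ) : Prop :=
  ContDiff ℝ (⊤ : ℕ∞) ψ ∧ HasCompactSupport ψ ∧ tsupport ψ ⊆ Ω

/-- smooth Y-periodic test functions (dense in H¹_per(Y)) -/
def PerTest {N : ℕ} (ψ : Euc N → ℝ) : Prop :=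
  ContDiff ℝ (⊤ : ℕ∞) ψ ∧ IsPeriodic ψ

/-- membership in W_per(Y): periodic, (weakly) differentiable, mean zero on Y -/
def WperMem {N : ℕ} (v : Euc N → ℝ) : Prop :=
  IsPeriodic v ∧ Differentiable ℝ v ∧ ∫ y in unitCell N, v y = 0

/-- ρ_ε = min{dist(·,∂Ω)/ε, 1} -/
def rhoEps {N : ℕ} (Ω : Set (Euc N)) (ε : ℝ) (x : Euc N) : ℝ :=
  min (Metric.infDist x (frontier Ω) / ε) 1

/-- Q_ε: piecewise Q1 (multilinear) interpolation of cell averages at the lattice points -/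
def Qop {N : ℕ} (ε : ℝ) (φ : Euc N → ℝ) (x : Euc N) : ℝ :=
  ∑ b : Fin N → Bool,
    ((ε ^ N)⁻¹ *
      ∫ y in {y : Euc N | ∀ k, y k ∈ Set.Ico
          (ε * ((⌊x k / ε⌋ + (if b k then 1 else 0) : ℤ) : ℝ))
          (ε * ((⌊x k / ε⌋ + (if b k then 1 else 0) : ℤ) : ℝ) + ε)}, φ y) *
    ∏ k, (if b k then (x k / ε - (⌊x k / ε⌋ : ℝ)) else 1 - (x k / ε - (⌊x k / ε⌋ : ℝ)))


namespace Stmt10Aux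

variable {N : ℕ} {ε : ℝ}

/-- the closed lattice box -/
def Box (N : ℕ) (ε : ℝ) (ξ : Fin N → ℤ) : Set (Euc N) :=
  {y | ∀ i, y i ∈ Set.Ico (ε * (ξ i : ℝ)) (ε * (ξ i : ℝ) + ε)}

def OBox (N : ℕ) (ε : ℝ) (ξ : Fin N → ℤ) : Set (Euc N) :=
  {y | ∀ i, y i ∈ Set.Ioo (ε * (ξ i : ℝ)) (ε * (ξ i : ℝ) + ε)}

def CBox (N : ℕ) (ε : ℝ) (ξ : Fin N → ℤ) : Set (Euc N) :=
  {y | ∀ i, y i ∈ Set.Icc (ε * (ξ i : ℝ)) (ε * (ξ i : ℝ) + ε)}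

lemma coordSet_eq (s : Fin N → Set ℝ) :
    {y : Euc N | ∀ i, y i ∈ s i}
      = (MeasurableEquiv.toLp 2 (Fin N → ℝ)).symm ⁻¹' (Set.pi Set.univ s) := by
  ext y
  simp [Set.mem_pi, MeasurableEquiv.toLp]
  exact Iff.rfl

lemma measurable_coordSet {s : Fin N → Set ℝ} (hs : ∀ i, MeasurableSet (s i)) :
    MeasurableSet {y : Euc N | ∀ i, y i ∈ s i} := by
  rw [coordSet_eq]
  exact (MeasurableEquiv.toLp 2 (Fin N → ℝ)).symm.measurable (MeasurableSet.univ_pi hs)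

lemma volume_coordSet {s : Fin N → Set ℝ} (hs : ∀ i, MeasurableSet (s i)) :
    volume {y : Euc N | ∀ i, y i ∈ s i} = ∏ i, volume (s i) := by
  rw [coordSet_eq]
  rw [(EuclideanSpace.volume_preserving_symm_measurableEquiv_toLp (Fin N)).measure_preimage
    ((MeasurableSet.univ_pi hs).nullMeasurableSet)]
  simp [volume_pi_pi]

lemma volume_Box (hε : 0 < ε) (ξ : Fin N → ℤ) :
    volume (Box N ε ξ) = ENNReal.ofReal ε ^ N := by
  rw [Box, volume_coordSet (fun i => measurableSet_Ico)]
  simp [Real.volume_Ico]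

lemma volume_OBox (hε : 0 < ε) (ξ : Fin N → ℤ) :
    volume (OBox N ε ξ) = ENNReal.ofReal ε ^ N := by
  rw [OBox, volume_coordSet (fun i => measurableSet_Ioo)]
  simp [Real.volume_Ioo]

lemma volume_CBox (hε : 0 < ε) (ξ : Fin N → ℤ) :
    volume (CBox N ε ξ) = ENNReal.ofReal ε ^ N := by
  rw [CBox, volume_coordSet (fun i => measurableSet_Icc)]
  simp [Real.volume_Icc]

lemma measurable_Box (ξ : Fin N → ℤ) : MeasurableSet (Box N ε ξ) :=
  measurable_coordSet (fun _ => measurableSet_Ico)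

lemma measurable_unitCell : MeasurableSet (unitCell N) :=
  measurable_coordSet (fun _ => measurableSet_Ioo)

lemma measurable_OBox {ξ : Fin N → ℤ} : MeasurableSet (OBox N ε ξ) :=
  measurable_coordSet (fun _ => measurableSet_Ioo)

lemma OBox_ae_eq_Box (hε : 0 < ε) (ξ : Fin N → ℤ) :
    OBox N ε ξ =ᵐ[volume] Box N ε ξ := by
  have hsub1 : OBox N ε ξ ⊆ Box N ε ξ := fun y hy i => Set.Ioo_subset_Ico_self (hy i)
  have hsub2 : Box N ε ξ ⊆ CBox N ε ξ := fun y hy i => Set.Ico_subset_Icc_self (hy i)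
  have hsub3 : OBox N ε ξ ⊆ CBox N ε ξ := hsub1.trans hsub2
  have hfin : volume (OBox N ε ξ) ≠ ⊤ := by
    rw [volume_OBox hε]; exact (ENNReal.pow_ne_top ofReal_ne_top)
  have h0 : volume (CBox N ε ξ \ OBox N ε ξ) = 0 := by
    rw [measure_diff hsub3 (measurable_coordSet (fun _ => measurableSet_Ioo)).nullMeasurableSet
        hfin, volume_CBox hε, volume_OBox hε, tsub_self]
  rw [MeasureTheory.ae_eq_set]
  constructor
  · rw [Set.diff_eq_empty.mpr hsub1]; exact measure_empty
  · exact measure_mono_null (Set.diff_subset_diff_left hsub2) h0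

lemma floor_eq_of_mem_Box (hε : 0 < ε) {ξ : Fin N → ℤ} {x : Euc N}
    (hx : x ∈ Box N ε ξ) (i : Fin N) : ⌊x i / ε⌋ = ξ i := by
  obtain ⟨h1, h2⟩ := hx i
  rw [Int.floor_eq_iff]
  constructor
  · rw [le_div_iff₀ hε]; linarith
  · rw [div_lt_iff₀ hε]; push_cast; linarith

lemma mem_cell_self (hε : 0 < ε) (x : Euc N) : x ∈ cell ε x := by
  intro i
  constructor
  · calc ε * (⌊x i / ε⌋ : ℝ) ≤ ε * (x i / ε) :=
          mul_le_mul_of_nonneg_left (Int.floor_le _) hε.le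
      _ = x i := by field_simp
  · have := Int.lt_floor_add_one (x i / ε)
    have h2 : x i / ε * ε < ((⌊x i / ε⌋ : ℝ) + 1) * ε := by
      exact mul_lt_mul_of_pos_right this hε
    rw [div_mul_cancel₀ _ hε.ne'] at h2
    linarith [h2]

lemma cell_eq_Box (hε : 0 < ε) {ξ : Fin N → ℤ} {x : Euc N} (hx : x ∈ Box N ε ξ) :
    cell ε x = Box N ε ξ := by
  unfold cell Box
  ext y
  simp only [Set.mem_setOf_eq, floor_eq_of_mem_Box hε hx]

lemma Box_disjoint (hε : 0 < ε) {ξ ξ' : Fin N → ℤ} (h : ξ ≠ ξ') :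
    Disjoint (Box N ε ξ) (Box N ε ξ') := by
  rw [Set.disjoint_left]
  intro x hx hx'
  apply h
  funext i
  rw [← floor_eq_of_mem_Box hε hx i, floor_eq_of_mem_Box hε hx' i]


def Tmap (N : ℕ) (ε : ℝ) (ξ : Fin N → ℤ) (y : Euc N) : Euc N :=
  vec (fun i => ε * (ξ i : ℝ) + ε * y i)

lemma Tmap_eq (ξ : Fin N → ℤ) (y : Euc N) :
    Tmap N ε ξ y = vec (fun i => ε * (ξ i : ℝ)) + ε • y := by
  ext i
  simp [Tmap, vec, PiLp.add_apply, PiLp.smul_apply, smul_eq_mul]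

lemma mem_OBox_iff (hε : 0 < ε) (ξ : Fin N → ℤ) (y : Euc N) :
    Tmap N ε ξ y ∈ OBox N ε ξ ↔ y ∈ unitCell N := by
  unfold OBox unitCell Tmap vec
  simp only [Set.mem_setOf_eq, Set.mem_Ioo, WithLp.ofLp_toLp]
  constructor
  · intro h i
    obtain ⟨h1, h2⟩ := h i
    constructor
    · nlinarith
    · nlinarith
  · intro h i
    obtain ⟨h1, h2⟩ := h i
    constructor
    · nlinarith
    · nlinarith

lemma lemA (hε : 0 < ε) (ξ : Fin N → ℤ) (u : Euc N → ℝ) :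
    ∫ y in unitCell N, u (Tmap N ε ξ y) = (ε ^ N)⁻¹ * ∫ x in Box N ε ξ, u x := by
  have hN : Module.finrank ℝ (Euc N) = N := finrank_euclideanSpace_fin
  set c : Euc N := vec (fun i => ε * (ξ i : ℝ)) with hc
  set g : Euc N → ℝ := (OBox N ε ξ).indicator u with hg
  have key : ∀ y : Euc N, (unitCell N).indicator (fun y => u (Tmap N ε ξ y)) y
      = g (c + ε • y) := by
    intro y
    rw [← Tmap_eq]
    by_cases hy : y ∈ unitCell N
    · rw [Set.indicator_of_mem hy, hg,
        Set.indicator_of_mem ((mem_OBox_iff hε ξ y).2 hy)]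
    · rw [Set.indicator_of_notMem hy, hg,
        Set.indicator_of_notMem (fun h => hy ((mem_OBox_iff hε ξ y).1 h))]
  calc ∫ y in unitCell N, u (Tmap N ε ξ y)
      = ∫ y, (unitCell N).indicator (fun y => u (Tmap N ε ξ y)) y := by
        rw [integral_indicator measurable_unitCell]
    _ = ∫ y, (fun z => g (c + z)) (ε • y) := by
        simp only [key]
    _ = |(ε ^ N)⁻¹| • ∫ z, g (c + z) := by
        have h := MeasureTheory.Measure.integral_comp_smul (volume : Measure (Euc N))
          (fun z => g (c + z)) ε
        rw [hN] at h
        exact h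
    _ = (ε ^ N)⁻¹ * ∫ z, g z := by
        rw [MeasureTheory.integral_add_left_eq_self g c, smul_eq_mul,
          abs_of_nonneg (inv_nonneg.2 (pow_nonneg hε.le _))]
    _ = (ε ^ N)⁻¹ * ∫ z in OBox N ε ξ, u z := by
        rw [hg, integral_indicator measurable_OBox]
    _ = (ε ^ N)⁻¹ * ∫ x in Box N ε ξ, u x := by
        rw [setIntegral_congr_set (OBox_ae_eq_Box hε ξ)]

lemma preconn_frontier {α : Type*} [TopologicalSpace α] {s Ω : Set α}
    (hs : IsPreconnected s) (h1 : (s ∩ Ω).Nonempty) (h2 : (s \ Ω).Nonempty) :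
    (s ∩ frontier Ω).Nonempty := by
  by_contra h
  rw [Set.not_nonempty_iff_eq_empty] at h
  have hsub : s ⊆ interior Ω ∪ (closure Ω)ᶜ := by
    intro x hx
    by_cases hxc : x ∈ closure Ω
    · left
      by_contra hxi
      exact (Set.eq_empty_iff_forall_notMem.1 h x) ⟨hx, hxc, hxi⟩
    · exact Or.inr hxc
  obtain ⟨x, hxs, hxΩ⟩ := h1
  obtain ⟨y, hys, hyΩ⟩ := h2
  have hxU : x ∈ interior Ω ∨ x ∈ (closure Ω)ᶜ := hsub hxs
  have hxU' : x ∈ interior Ω := by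
    rcases hxU with h' | h'
    · exact h'
    · exact absurd (subset_closure hxΩ) h'
  have hyV : y ∈ (closure Ω)ᶜ := by
    rcases hsub hys with h' | h'
    · exact absurd (interior_subset h') hyΩ
    · exact h'
  obtain ⟨z, hz⟩ := hs (interior Ω) ((closure Ω)ᶜ) isOpen_interior
    isClosed_closure.isOpen_compl hsub ⟨x, hxs, hxU'⟩ ⟨y, hys, hyV⟩
  exact hz.2.2 (subset_closure (interior_subset hz.2.1))

lemma convex_Box (ξ : Fin N → ℤ) : Convex ℝ (Box N ε ξ) := by
  have h : Box N ε ξ = ⋂ i, (⇑(PiLp.projₗ (𝕜 := ℝ) 2 (fun _ : Fin N => ℝ) i) ⁻¹'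
      (Set.Ico (ε * (ξ i : ℝ)) (ε * (ξ i : ℝ) + ε)) : Set (Euc N)) := by
    ext y
    simp only [Box, Set.mem_setOf_eq, Set.mem_iInter, Set.mem_preimage, PiLp.projₗ_apply]
  rw [h]
  exact convex_iInter fun i => (convex_Ico _ _).linear_preimage _

lemma dist_lt_of_mem_Box (hN : 1 ≤ N) (hε : 0 < ε) {ξ : Fin N → ℤ} {x z : Euc N}
    (hx : x ∈ Box N ε ξ) (hz : z ∈ Box N ε ξ) : dist x z < Real.sqrt N * ε := by
  have hNe : (Finset.univ : Finset (Fin N)).Nonempty := by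
    rw [Finset.univ_nonempty_iff]
    exact Fin.pos_iff_nonempty.mp hN
  have hterm : ∀ i : Fin N, dist (x i) (z i) ^ 2 < ε ^ 2 := by
    intro i
    have h1 := hx i
    have h2 := hz i
    have habs : |x i - z i| < ε := by
      rw [abs_sub_lt_iff]
      constructor
      · obtain ⟨a1, a2⟩ := h1; obtain ⟨b1, b2⟩ := h2; linarith
      · obtain ⟨a1, a2⟩ := h1; obtain ⟨b1, b2⟩ := h2; linarith
    rw [Real.dist_eq]
    exact pow_lt_pow_left₀ habs (abs_nonneg _) (by norm_num)
  have hsum : ∑ i, dist (x i) (z i) ^ 2 < N * ε ^ 2 := by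
    calc ∑ i, dist (x i) (z i) ^ 2 < ∑ _i : Fin N, ε ^ 2 :=
          Finset.sum_lt_sum_of_nonempty hNe (fun i _ => hterm i)
      _ = N * ε ^ 2 := by simp [mul_comm]
  rw [EuclideanSpace.dist_eq]
  have h2 : Real.sqrt (∑ i, dist (x i) (z i) ^ 2) < Real.sqrt (↑N * ε ^ 2) :=
    Real.sqrt_lt_sqrt (Finset.sum_nonneg fun i _ => sq_nonneg _) hsum
  rw [Real.sqrt_mul (Nat.cast_nonneg N), Real.sqrt_sq hε.le] at h2
  exact h2


lemma coord_abs_le_norm (x : Euc N) (i : Fin N) : |x i| ≤ ‖x‖ := by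
  rw [EuclideanSpace.norm_eq]
  have h1 : |x i| ^ 2 ≤ ∑ j, ‖x j‖ ^ 2 := by
    have h := Finset.single_le_sum (f := fun j => ‖x j‖ ^ 2)
      (fun j _ => sq_nonneg _) (Finset.mem_univ i)
    simpa [Real.norm_eq_abs] using h
  calc |x i| = Real.sqrt (|x i| ^ 2) := by rw [Real.sqrt_sq (abs_nonneg _)]
    _ ≤ _ := Real.sqrt_le_sqrt h1

lemma finite_index (hε : 0 < ε) {Ω : Set (Euc N)} (hΩb : Bornology.IsBounded Ω) :
    {ξ : Fin N → ℤ | (Box N ε ξ ∩ Ω).Nonempty}.Finite := by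
  obtain ⟨R, hR⟩ := hΩb.exists_norm_le
  apply Set.Finite.subset
    (Set.Finite.pi (fun i : Fin N => Set.finite_Icc (⌈(-R - ε) / ε⌉) (⌊R / ε⌋)))
  rintro ξ ⟨x, hxB, hxΩ⟩
  intro i _
  have hx1 := (hxB i).1
  have hx2 := (hxB i).2
  have hxn : |x i| ≤ R := le_trans (coord_abs_le_norm x i) (hR x hxΩ)
  obtain ⟨hl, hr⟩ := abs_le.1 hxn
  have h1 : (ξ i : ℝ) ≤ R / ε := by
    rw [le_div_iff₀ hε, mul_comm]
    linarith
  have h2 : (-R - ε) / ε ≤ (ξ i : ℝ) := by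
    rw [div_le_iff₀ hε, mul_comm]
    linarith
  exact Set.mem_Icc.2 ⟨Int.ceil_le.2 h2, Int.le_floor.2 h1⟩

end Stmt10Aux

/-- the (almost) integral-preserving property of the unfolding operator,
with exact unfolding over Ω̃_ε. -/
theorem stmt10 (N : ℕ) (hN : 1 ≤ N)
    (Ω : Set (Euc N)) (hΩo : IsOpen Ω) (hΩb : Bornology.IsBounded Ω)
    (ε : ℝ) (hε : 0 < ε)
    (u : Euc N → ℝ) (hu0 : ∀ x ∉ Ω, u x = 0)
    (hint : IntegrableOn u (bigCell ε Ω)) :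
    (|(∫ x in Ω, u x) - ∫ x in Ω, ∫ y in unitCell N, unfoldOp ε u x y| ≤
      ∫ x in {x ∈ bigCell ε Ω | Metric.infDist x (frontier Ω) < Real.sqrt N * ε}, |u x|) ∧
    ((∫ x in Ω, u x) = ∫ x in bigCell ε Ω, ∫ y in unitCell N, unfoldOp ε u x y) := by
  
  classical
  open Stmt10Aux in
  have hIfin : {ξ : Fin N → ℤ | (Box N ε ξ ∩ Ω).Nonempty}.Finite :=
    finite_index hε hΩb
  set J : Finset (Fin N → ℤ) := hIfin.toFinset with hJ
  have hmemJ : ∀ ξ, ξ ∈ J ↔ (Box N ε ξ ∩ Ω).Nonempty := by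
    intro ξ; rw [hJ, Set.Finite.mem_toFinset]; exact Iff.rfl
  have hcellBox : ∀ x : Euc N, cell ε x = Box N ε (fun i => ⌊x i / ε⌋) := fun x => rfl
  have hbig : bigCell ε Ω = ⋃ ξ ∈ J, Box N ε ξ := by
    ext x
    simp only [Set.mem_iUnion, exists_prop]
    constructor
    · intro hx
      refine ⟨fun i => ⌊x i / ε⌋, ?_, ?_⟩
      · rw [hmemJ]
        rw [bigCell, Set.mem_setOf_eq, hcellBox] at hx
        exact hx
      · have h := mem_cell_self hε x
        rw [hcellBox] at h
        exact h
    · rintro ⟨ξ, hξJ, hxB⟩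
      rw [bigCell, Set.mem_setOf_eq, cell_eq_Box hε hxB]
      exact (hmemJ ξ).1 hξJ
  have hmeasBox : ∀ ξ : Fin N → ℤ, MeasurableSet (Box N ε ξ) :=
    fun ξ => measurable_Box ξ
  have hmeasBig : MeasurableSet (bigCell ε Ω) := by
    rw [hbig]; exact J.measurableSet_biUnion (fun ξ _ => hmeasBox ξ)
  have hpair : (↑J : Set (Fin N → ℤ)).Pairwise (Function.onFun Disjoint fun ξ => Box N ε ξ) :=
    fun ξ _ ξ' _ h => Box_disjoint hε h
  have hBoxSub : ∀ ξ ∈ J, Box N ε ξ ⊆ bigCell ε Ω := by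
    intro ξ hξ x hx
    rw [bigCell, Set.mem_setOf_eq, cell_eq_Box hε hx]
    exact (hmemJ ξ).1 hξ
  have hintBox : ∀ ξ ∈ J, IntegrableOn u (Box N ε ξ) := fun ξ hξ =>
    hint.mono_set (hBoxSub ξ hξ)
  set F : Euc N → ℝ := fun x => ∫ y in unitCell N, unfoldOp ε u x y with hF
  set m : (Fin N → ℤ) → ℝ := fun ξ => (ε ^ N)⁻¹ * ∫ z in Box N ε ξ, u z with hm
  have hFbox : ∀ ξ : Fin N → ℤ, ∀ x ∈ Box N ε ξ, F x = m ξ := by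
    intro ξ x hx
    have h1 : ∀ y : Euc N, unfoldOp ε u x y = u (Tmap N ε ξ y) := by
      intro y
      have hco : (fun i => ε * (⌊x i / ε⌋ : ℝ) + ε * y i)
          = fun i => ε * (ξ i : ℝ) + ε * y i := by
        funext i
        rw [floor_eq_of_mem_Box hε hx i]
      unfold unfoldOp Tmap
      rw [hco]
    simp only [hF, h1, hm]
    exact lemA hε ξ u
  have hεN : (0:ℝ) < ε ^ N := pow_pos hε N
  have hvolBoxtoReal : ∀ ξ : Fin N → ℤ, (volume (Box N ε ξ)).toReal = ε ^ N := by
    intro ξ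
    rw [volume_Box hε ξ, ← ENNReal.ofReal_pow hε.le, ENNReal.toReal_ofReal hεN.le]
  have hvolne : ∀ ξ : Fin N → ℤ, volume (Box N ε ξ) ≠ ⊤ := by
    intro ξ; rw [volume_Box hε ξ]; exact ENNReal.pow_ne_top ofReal_ne_top
  have hFintBox : ∀ ξ ∈ J, IntegrableOn F (Box N ε ξ) := by
    intro ξ hξ
    have h : IntegrableOn (fun _ => m ξ) (Box N ε ξ) :=
      integrableOn_const (hvolne ξ)
    exact h.congr_fun (fun x hx => (hFbox ξ x hx).symm) (hmeasBox ξ)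
  have hFintBig : IntegrableOn F (bigCell ε Ω) := by
    rw [hbig]; exact integrableOn_finset_iUnion.2 hFintBox
  have hBoxF : ∀ ξ ∈ J, ∫ x in Box N ε ξ, F x = ∫ z in Box N ε ξ, u z := by
    intro ξ hξ
    rw [setIntegral_congr_fun (hmeasBox ξ) (hFbox ξ), setIntegral_const, smul_eq_mul,
      measureReal_def, hvolBoxtoReal ξ, hm]
    field_simp
  have key2 : ∫ x in bigCell ε Ω, u x = ∫ x in bigCell ε Ω, F x := by
    rw [hbig, integral_biUnion_finset J (fun ξ _ => hmeasBox ξ) hpair hintBox,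
      integral_biUnion_finset J (fun ξ _ => hmeasBox ξ) hpair hFintBox]
    exact Finset.sum_congr rfl (fun ξ hξ => (hBoxF ξ hξ).symm)
  have hΩsub : Ω ⊆ bigCell ε Ω := fun x hx => ⟨x, mem_cell_self hε x, hx⟩
  have hdiffmeas : MeasurableSet (bigCell ε Ω \ Ω) := hmeasBig.diff hΩo.measurableSet
  have hsplit : ∀ g : Euc N → ℝ, IntegrableOn g (bigCell ε Ω) →
      ∫ x in bigCell ε Ω, g x = (∫ x in Ω, g x) + ∫ x in bigCell ε Ω \ Ω, g x := by
    intro g hg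
    rw [← setIntegral_union Set.disjoint_sdiff_right hdiffmeas (hg.mono_set hΩsub)
      (hg.mono_set Set.diff_subset), Set.union_diff_cancel hΩsub]
  have hudiff : ∫ x in bigCell ε Ω \ Ω, u x = 0 :=
    setIntegral_eq_zero_of_forall_eq_zero (fun x hx => hu0 x hx.2)
  have hc2 : (∫ x in Ω, u x) = ∫ x in bigCell ε Ω, F x := by
    have h := hsplit u hint
    rw [hudiff, add_zero] at h
    rw [← h, key2]
  refine ⟨?_, hc2⟩
  have hdiff1 : (∫ x in Ω, u x) - (∫ x in Ω, F x) = ∫ x in bigCell ε Ω \ Ω, F x := by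
    have h := hsplit F hFintBig
    rw [hc2, h]; ring
  rw [hdiff1]
  set K : Finset (Fin N → ℤ) := J.filter (fun ξ => (Box N ε ξ \ Ω).Nonempty) with hK
  have hKJ : K ⊆ J := Finset.filter_subset _ _
  have hdiffBox : bigCell ε Ω \ Ω = ⋃ ξ ∈ J, (Box N ε ξ \ Ω) := by
    rw [hbig]
    ext x
    simp only [Set.mem_diff, Set.mem_iUnion, exists_prop]
    tauto
  have hmeasBoxD : ∀ ξ ∈ J, MeasurableSet (Box N ε ξ \ Ω) :=
    fun ξ _ => (hmeasBox ξ).diff hΩo.measurableSet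
  have hpairD : (↑J : Set (Fin N → ℤ)).Pairwise (Function.onFun Disjoint fun ξ => Box N ε ξ \ Ω) :=
    fun ξ _ ξ' _ h => (Box_disjoint hε h).mono Set.diff_subset Set.diff_subset
  have hFintBoxD : ∀ ξ ∈ J, IntegrableOn F (Box N ε ξ \ Ω) :=
    fun ξ hξ => (hFintBox ξ hξ).mono_set Set.diff_subset
  have hterm : ∀ ξ ∈ J, ∫ x in Box N ε ξ \ Ω, F x
      = (volume (Box N ε ξ \ Ω)).toReal * m ξ := by
    intro ξ hξ
    rw [setIntegral_congr_fun (hmeasBoxD ξ hξ) (fun x hx => hFbox ξ x hx.1),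
      setIntegral_const, smul_eq_mul, measureReal_def]
  have hsum1 : ∫ x in bigCell ε Ω \ Ω, F x
      = ∑ ξ ∈ J, (volume (Box N ε ξ \ Ω)).toReal * m ξ := by
    rw [hdiffBox, integral_biUnion_finset J hmeasBoxD hpairD hFintBoxD]
    exact Finset.sum_congr rfl hterm
  have habs : ∀ ξ ∈ J, |(volume (Box N ε ξ \ Ω)).toReal * m ξ|
      ≤ ∫ x in Box N ε ξ, |u x| := by
    intro ξ hξ
    have hv : (volume (Box N ε ξ \ Ω)).toReal ≤ ε ^ N := by
      calc (volume (Box N ε ξ \ Ω)).toReal ≤ (volume (Box N ε ξ)).toReal :=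
            ENNReal.toReal_mono (hvolne ξ) (measure_mono Set.diff_subset)
        _ = ε ^ N := hvolBoxtoReal ξ
    have h2 : |∫ z in Box N ε ξ, u z| ≤ ∫ z in Box N ε ξ, |u z| := by
      simpa [Real.norm_eq_abs] using
        norm_integral_le_integral_norm (μ := volume.restrict (Box N ε ξ)) u
    have h1 : |m ξ| = (ε ^ N)⁻¹ * |∫ z in Box N ε ξ, u z| := by
      rw [hm, abs_mul, abs_of_nonneg (inv_nonneg.2 hεN.le)]
    rw [abs_mul, h1, abs_of_nonneg ENNReal.toReal_nonneg]
    calc (volume (Box N ε ξ \ Ω)).toReal * ((ε ^ N)⁻¹ * |∫ z in Box N ε ξ, u z|)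
        ≤ ε ^ N * ((ε ^ N)⁻¹ * |∫ z in Box N ε ξ, u z|) :=
          mul_le_mul_of_nonneg_right hv (by positivity)
      _ = |∫ z in Box N ε ξ, u z| := by field_simp
      _ ≤ ∫ z in Box N ε ξ, |u z| := h2
  have hzero : ∀ ξ ∈ J, ξ ∉ K → |(volume (Box N ε ξ \ Ω)).toReal * m ξ| = 0 := by
    intro ξ hξJ hξK
    have hemp : Box N ε ξ \ Ω = ∅ := by
      rw [← Set.not_nonempty_iff_eq_empty]
      intro h
      exact hξK (Finset.mem_filter.2 ⟨hξJ, h⟩)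
    rw [hemp]
    simp
  have hbound : |∫ x in bigCell ε Ω \ Ω, F x| ≤ ∑ ξ ∈ K, ∫ x in Box N ε ξ, |u x| := by
    rw [hsum1]
    calc |∑ ξ ∈ J, (volume (Box N ε ξ \ Ω)).toReal * m ξ|
        ≤ ∑ ξ ∈ J, |(volume (Box N ε ξ \ Ω)).toReal * m ξ| :=
          Finset.abs_sum_le_sum_abs _ _
      _ = ∑ ξ ∈ K, |(volume (Box N ε ξ \ Ω)).toReal * m ξ| :=
          (Finset.sum_subset hKJ hzero).symm
      _ ≤ ∑ ξ ∈ K, ∫ x in Box N ε ξ, |u x| :=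
          Finset.sum_le_sum (fun ξ hξ => habs ξ (hKJ hξ))
  have hintabs : ∀ ξ ∈ K, IntegrableOn (fun x => |u x|) (Box N ε ξ) :=
    fun ξ hξ => (hintBox ξ (hKJ hξ)).abs
  have hsum2 : ∑ ξ ∈ K, ∫ x in Box N ε ξ, |u x|
      = ∫ x in ⋃ ξ ∈ K, Box N ε ξ, |u x| :=
    (integral_biUnion_finset K (fun ξ _ => hmeasBox ξ)
      (hpair.mono (Finset.coe_subset.2 hKJ)) hintabs).symm
  have hKsubΛ : (⋃ ξ ∈ K, Box N ε ξ)
      ⊆ {x ∈ bigCell ε Ω | Metric.infDist x (frontier Ω) < Real.sqrt N * ε} := by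
    intro x hx
    simp only [Set.mem_iUnion, exists_prop] at hx
    obtain ⟨ξ, hξK, hxB⟩ := hx
    have hξJ := hKJ hξK
    have h1 : (Box N ε ξ ∩ Ω).Nonempty := (hmemJ ξ).1 hξJ
    have h2 : (Box N ε ξ \ Ω).Nonempty := (Finset.mem_filter.1 hξK).2
    obtain ⟨z, hzB, hzF⟩ :=
      preconn_frontier (convex_Box ξ).isPreconnected h1 h2
    refine Set.mem_sep (hBoxSub ξ hξJ hxB) ?_
    calc Metric.infDist x (frontier Ω) ≤ dist x z := Metric.infDist_le_dist_of_mem hzF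
      _ < Real.sqrt N * ε := dist_lt_of_mem_Box hN hε hxB hzB
  have hfinal : ∫ x in ⋃ ξ ∈ K, Box N ε ξ, |u x|
      ≤ ∫ x in {x ∈ bigCell ε Ω | Metric.infDist x (frontier Ω) < Real.sqrt N * ε}, |u x| := by
    apply setIntegral_mono_set ((hint.mono_set (Set.sep_subset _ _)).abs)
    · exact ae_of_all _ (fun x => abs_nonneg _)
    · exact HasSubset.Subset.eventuallyLE hKsubΛ
  calc |∫ x in bigCell ε Ω \ Ω, F x| ≤ ∑ ξ ∈ K, ∫ x in Box N ε ξ, |u x| := hbound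
    _ = ∫ x in ⋃ ξ ∈ K, Box N ε ξ, |u x| := hsum2
    _ ≤ _ := hfinal
end
end

section
/- Let Ω ⊂ ℝ^N be bounded Lipschitz and v ∈ H^1(Ω). Then ‖v − M^ε_Y(v)‖_{L²(Ω)} ≤ C ε ‖∇v‖_{L²(Ω)} and ‖v − 𝒯_ε(v)‖_{L²(Ω×Y)} ≤ C ε ‖∇v‖_{L²(Ω)}, where M^ε_Y(v)(x) is the mean of v over the cell containing x, v is extended to Ω̃_ε by a uniformly bounded extension operator, and C depends only on N and Ω. -/
noncomputable section
open MeasureTheory Filter Topology ENNReal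

namespace S13

variable {N : ℕ}

def cellOf (ε : ℝ) (k : Fin N → ℤ) : Set (Euc N) :=
  {y | ∀ i, y i ∈ Set.Ico (ε * (k i : ℝ)) (ε * (k i : ℝ) + ε)}

lemma measurableSet_cellOf (ε : ℝ) (k : Fin N → ℤ) : MeasurableSet (cellOf ε k) := by
  have : cellOf ε k = ⋂ i, (fun y : Euc N => y i) ⁻¹'
      Set.Ico (ε * (k i : ℝ)) (ε * (k i : ℝ) + ε) := by
    ext y; simp [cellOf, Set.mem_iInter]
  rw [this]
  exact MeasurableSet.iInter fun i =>
    ((by fun_prop : Continuous fun y : Euc N => y i).measurable) measurableSet_Ico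

lemma measurableSet_unitCell : MeasurableSet (unitCell N) := by
  have : unitCell N = ⋂ i, (fun y : Euc N => y i) ⁻¹' Set.Ioo (0:ℝ) 1 := by
    ext y; simp [unitCell, Set.mem_iInter]
  rw [this]
  exact MeasurableSet.iInter fun i =>
    ((by fun_prop : Continuous fun y : Euc N => y i).measurable) measurableSet_Ioo

lemma volume_cellOf {ε : ℝ} (hε : 0 < ε) (k : Fin N → ℤ) :
    volume (cellOf ε k) = ENNReal.ofReal (ε ^ N) := by
  have he : cellOf ε k = (MeasurableEquiv.toLp 2 (Fin N → ℝ)).symm ⁻¹'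
      (Set.univ.pi fun i => Set.Ico (ε * (k i : ℝ)) (ε * (k i : ℝ) + ε)) := by
    ext y; simp [cellOf, Set.mem_pi]
  rw [he, (EuclideanSpace.volume_preserving_symm_measurableEquiv_toLp (Fin N)).measure_preimage
    ((MeasurableSet.univ_pi fun i => measurableSet_Ico).nullMeasurableSet)]
  rw [volume_pi_pi]
  simp [Real.volume_Ico, ENNReal.ofReal_pow hε.le]

lemma mem_cellOf_floor {ε : ℝ} (hε : 0 < ε) (x : Euc N) :
    x ∈ cellOf ε (fun i => ⌊x i / ε⌋) := by
  intro i
  have h1 : (⌊x i / ε⌋ : ℝ) ≤ x i / ε := Int.floor_le _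
  have h2 : x i / ε < ⌊x i / ε⌋ + 1 := Int.lt_floor_add_one _
  have hx : ε * (x i / ε) = x i := by field_simp
  constructor <;> nlinarith

lemma floor_eq_of_mem {ε : ℝ} (hε : 0 < ε) {x : Euc N} {k : Fin N → ℤ}
    (hx : x ∈ cellOf ε k) (i : Fin N) : ⌊x i / ε⌋ = k i := by
  obtain ⟨h1, h2⟩ := hx i
  rw [Int.floor_eq_iff]
  constructor
  · rw [le_div_iff₀ hε]; linarith
  · rw [div_lt_iff₀ hε]; linarith

lemma cell_eq_cellOf {ε : ℝ} (hε : 0 < ε) {x : Euc N} {k : Fin N → ℤ}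
    (hx : x ∈ cellOf ε k) : cell ε x = cellOf ε k := by
  have h : ∀ i, ⌊x i / ε⌋ = k i := floor_eq_of_mem hε hx
  unfold cell cellOf
  ext y; constructor <;> intro hy i <;> have := hy i <;> rw [h i] at * <;> exact this

lemma cell_eq_floor (ε : ℝ) (x : Euc N) : cell ε x = cellOf ε (fun i => ⌊x i / ε⌋) := rfl

lemma pairwise_disjoint_cellOf {ε : ℝ} (hε : 0 < ε) :
    Pairwise (Function.onFun Disjoint (fun k : Fin N → ℤ => cellOf ε k)) := by
  intro k k' hne
  rw [Function.onFun, Set.disjoint_left]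
  intro x hx hx'
  exact hne (funext fun i => (floor_eq_of_mem hε hx i).symm.trans (floor_eq_of_mem hε hx' i))

lemma iUnion_cellOf {ε : ℝ} (hε : 0 < ε) : (⋃ k : Fin N → ℤ, cellOf ε k) = Set.univ := by
  ext x
  simp only [Set.mem_iUnion, Set.mem_univ, iff_true]
  exact ⟨_, mem_cellOf_floor hε x⟩

lemma convex_cellOf {ε : ℝ} (k : Fin N → ℤ) {x z : Euc N} {c : ℝ}
    (hx : x ∈ cellOf ε k) (hz : z ∈ cellOf ε k) (hc0 : 0 ≤ c) (hc1 : c ≤ 1) :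
    c • x + (1 - c) • z ∈ cellOf ε k := by
  intro i
  have : (c • x + (1 - c) • z) i = c * x i + (1 - c) * z i := rfl
  rw [this]
  exact (convex_Ico _ _) (hx i) (hz i) hc0 (by linarith) (by ring)

lemma sq_norm_sub_le {ε : ℝ} (hε : 0 < ε) (k : Fin N → ℤ) {x z : Euc N}
    (hx : x ∈ cellOf ε k) (hz : z ∈ cellOf ε k) : ‖x - z‖ ^ 2 ≤ N * ε ^ 2 := by
  have hn : ‖x - z‖ ^ 2 = ∑ i, ‖(x - z) i‖ ^ 2 := by
    rw [EuclideanSpace.norm_eq]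
    rw [Real.sq_sqrt]
    positivity
  rw [hn]
  have hb : ∀ i, ‖(x - z) i‖ ^ 2 ≤ ε ^ 2 := by
    intro i
    obtain ⟨ha1, ha2⟩ := hx i
    obtain ⟨hb1, hb2⟩ := hz i
    have : (x - z) i = x i - z i := rfl
    rw [this, Real.norm_eq_abs, sq_abs]
    nlinarith
  calc ∑ i, ‖(x - z) i‖ ^ 2 ≤ ∑ _i : Fin N, ε ^ 2 := Finset.sum_le_sum fun i _ => hb i
    _ = N * ε ^ 2 := by simp [Finset.sum_const, mul_comm]

lemma measurable_gradient (v : Euc N → ℝ) : Measurable (fun w : Euc N => gradient v w) := by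
  have h := measurable_fderiv ℝ v (E := Euc N) (F := ℝ)
  exact ((InnerProductSpace.toDual ℝ (Euc N)).symm.continuous.measurable).comp h

lemma measurable_gradsq (v : Euc N → ℝ) :
    Measurable (fun w : Euc N => ENNReal.ofReal (‖gradient v w‖ ^ 2)) :=
  ENNReal.measurable_ofReal.comp (((measurable_gradient v).norm).pow_const 2)


lemma lintegral_sq_le {α : Type*} [MeasurableSpace α] (μ : Measure α) (f : α → ℝ≥0∞)
    (hf : AEMeasurable f μ) :
    (∫⁻ a, f a ∂μ) ^ 2 ≤ μ Set.univ * ∫⁻ a, (f a) ^ 2 ∂μ := by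
  have hpq : (2:ℝ).HolderConjugate 2 := Real.HolderConjugate.two_two
  have key := ENNReal.lintegral_mul_le_Lp_mul_Lq μ hpq hf
    (aemeasurable_const : AEMeasurable (fun _ => (1:ℝ≥0∞)) μ)
  simp only [Pi.mul_apply, mul_one, ENNReal.one_rpow, lintegral_const, one_mul] at key
  have h2 : (∫⁻ a, f a ∂μ) ^ 2 ≤
      ((∫⁻ a, f a ^ (2:ℝ) ∂μ) ^ (1/(2:ℝ)) * (μ Set.univ) ^ (1/(2:ℝ))) ^ 2 :=
    pow_le_pow_left₀ (by positivity) key 2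
  refine h2.trans_eq ?_
  rw [mul_pow]
  rw [← ENNReal.rpow_natCast ((∫⁻ a, f a ^ (2:ℝ) ∂μ) ^ (1/(2:ℝ))) 2,
      ← ENNReal.rpow_natCast ((μ Set.univ) ^ (1/(2:ℝ))) 2,
      ← ENNReal.rpow_mul, ← ENNReal.rpow_mul]
  norm_num
  exact mul_comm _ _

lemma segment_bound {v : Euc N → ℝ} (hv : Differentiable ℝ v) (x z : Euc N) :
    ENNReal.ofReal ((v x - v z) ^ 2) ≤
      ENNReal.ofReal (‖x - z‖ ^ 2) *
        ∫⁻ t in Set.Ioc (0:ℝ) 1,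
          ENNReal.ofReal (‖gradient v (t • x + (1 - t) • z)‖ ^ 2) := by
  by_cases hxz : x = z
  · simp [hxz]
  set p : ℝ → Euc N := fun t => t • x + (1 - t) • z with hp_def
  set g : ℝ → ℝ := fun t => ‖gradient v (p t)‖ with hg_def
  set L : ℝ≥0∞ := ∫⁻ t in Set.Ioc (0:ℝ) 1, ENNReal.ofReal (g t ^ 2) with hL_def
  show ENNReal.ofReal ((v x - v z) ^ 2) ≤ ENNReal.ofReal (‖x - z‖ ^ 2) * L
  rcases eq_top_or_lt_top L with hLtop | hLlt
  · rw [hLtop, ENNReal.mul_top]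
    · exact le_top
    · simp only [ne_eq, ENNReal.ofReal_eq_zero, not_le]
      have : 0 < ‖x - z‖ := norm_pos_iff.2 (sub_ne_zero.2 hxz)
      positivity
  -- continuity and measurability
  have hp_cont : Continuous p := by fun_prop
  set h : ℝ → ℝ := fun t => fderiv ℝ v (p t) (x - z) with hh_def
  have hm_h : Measurable h :=
    (measurable_fderiv_apply_const ℝ v (x - z)).comp hp_cont.measurable
  have hm_g : Measurable g := ((measurable_gradient v).comp hp_cont.measurable).norm
  -- derivative facts
  have hp : ∀ t : ℝ, HasDerivAt p (x - z) t := by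
    intro t
    have h1 : HasDerivAt (fun s : ℝ => s • x) ((1:ℝ) • x) t :=
      (hasDerivAt_id t).smul_const x
    have h2 : HasDerivAt (fun s : ℝ => (1 - s) • z) ((-1:ℝ) • z) t := by
      have : HasDerivAt (fun s : ℝ => 1 - s) (-1) t := by
        simpa using (hasDerivAt_id t).const_sub 1
      exact this.smul_const z
    have := h1.add h2
    rw [show x - z = (1:ℝ) • x + (-1:ℝ) • z by simp [sub_eq_add_neg]]
    exact this
  have hd : ∀ t : ℝ, HasDerivAt (fun s => v (p s)) (h t) t := fun t =>
    ((hv (p t)).hasFDerivAt.comp_hasDerivAt t (hp t))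
  -- |h| ≤ g * ‖x - z‖
  have hinner : ∀ w y, fderiv ℝ v w y = (inner ℝ (gradient v w) y : ℝ) := by
    intro w y
    simp [gradient, InnerProductSpace.toDual_symm_apply]
  have habs : ∀ t, |h t| ≤ g t * ‖x - z‖ := by
    intro t
    rw [hh_def]
    simp only
    rw [hinner]
    exact abs_real_inner_le_norm _ _
  -- integrability of h on Ioc 0 1
  have hint : IntegrableOn h (Set.Ioc (0:ℝ) 1) := by
    refine ⟨hm_h.aestronglyMeasurable, ?_⟩
    rw [hasFiniteIntegral_iff_norm]
    calc ∫⁻ t in Set.Ioc (0:ℝ) 1, ENNReal.ofReal ‖h t‖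
        ≤ ∫⁻ t in Set.Ioc (0:ℝ) 1,
            ENNReal.ofReal (‖x - z‖) * (1 + ENNReal.ofReal (g t ^ 2)) := by
          refine lintegral_mono fun t => ?_
          rw [← ENNReal.ofReal_one, ← ENNReal.ofReal_add zero_le_one (sq_nonneg _),
              ← ENNReal.ofReal_mul (norm_nonneg _)]
          refine ENNReal.ofReal_le_ofReal ?_
          have h1 := habs t
          have h2 : g t ≤ 1 + g t ^ 2 := by nlinarith [sq_nonneg (g t - 1)]
          rw [Real.norm_eq_abs]
          calc |h t| ≤ g t * ‖x - z‖ := h1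
            _ ≤ (1 + g t ^ 2) * ‖x - z‖ := by
                have := norm_nonneg (x - z)
                nlinarith [norm_nonneg (gradient v (p t))]
            _ = ‖x - z‖ * (1 + g t ^ 2) := by ring
      _ = ENNReal.ofReal (‖x - z‖) *
            ∫⁻ t in Set.Ioc (0:ℝ) 1, (1 + ENNReal.ofReal (g t ^ 2)) := by
          rw [lintegral_const_mul' _ _ ENNReal.ofReal_ne_top]
      _ < ⊤ := by
          rw [lintegral_add_left measurable_const]
          simp only [lintegral_const, Measure.restrict_apply_univ, Real.volume_Ioc]
          refine ENNReal.mul_lt_top ENNReal.ofReal_lt_top ?_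
          exact ENNReal.add_lt_top.2 ⟨by norm_num [ENNReal.mul_lt_top], hLlt⟩
  have hii : IntervalIntegrable h volume 0 1 :=
    (intervalIntegrable_iff_integrableOn_Ioc_of_le (by norm_num)).2 hint
  -- FTC
  have hftc : v x - v z = ∫ t in (0:ℝ)..1, h t := by
    have := intervalIntegral.integral_eq_sub_of_hasDerivAt
      (f := fun s => v (p s)) (f' := h) (fun t _ => hd t) hii
    have hp1 : p 1 = x := by simp [hp_def]
    have hp0 : p 0 = z := by simp [hp_def]
    rw [this]
    show v x - v z = v (p 1) - v (p 0)
    rw [hp1, hp0]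
  have hftc' : v x - v z = ∫ t in Set.Ioc (0:ℝ) 1, h t := by
    rw [hftc, intervalIntegral.integral_of_le (by norm_num : (0:ℝ) ≤ 1)]
  -- abs bound
  set A : ℝ := ∫ t in Set.Ioc (0:ℝ) 1, |h t| with hA_def
  have hA_nonneg : 0 ≤ A := integral_nonneg fun t => abs_nonneg _
  have habs2 : |v x - v z| ≤ A := by
    rw [hftc']
    calc |∫ t in Set.Ioc (0:ℝ) 1, h t| ≤ ∫ t in Set.Ioc (0:ℝ) 1, |h t| := by
          simpa [Real.norm_eq_abs] using
            norm_integral_le_integral_norm (μ := volume.restrict (Set.Ioc (0:ℝ) 1)) h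
      _ = A := rfl
  -- to ENNReal
  have hstep1 : ENNReal.ofReal ((v x - v z) ^ 2) ≤ (ENNReal.ofReal A) ^ 2 := by
    rw [← ENNReal.ofReal_pow hA_nonneg]
    refine ENNReal.ofReal_le_ofReal ?_
    rw [← sq_abs (v x - v z)]
    exact pow_le_pow_left₀ (abs_nonneg _) habs2 2
  have hA_lint : ENNReal.ofReal A = ∫⁻ t in Set.Ioc (0:ℝ) 1, ENNReal.ofReal (|h t|) :=
    ofReal_integral_eq_lintegral_ofReal hint.abs (ae_of_all _ fun t => abs_nonneg _)
  have hcs : (ENNReal.ofReal A) ^ 2 ≤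
      ∫⁻ t in Set.Ioc (0:ℝ) 1, ENNReal.ofReal (h t ^ 2) := by
    rw [hA_lint]
    have := lintegral_sq_le (volume.restrict (Set.Ioc (0:ℝ) 1))
      (fun t => ENNReal.ofReal (|h t|))
      ((ENNReal.measurable_ofReal.comp hm_h.abs).aemeasurable)
    simp only [Measure.restrict_apply_univ, Real.volume_Ioc] at this
    norm_num at this
    refine this.trans_eq ?_
    refine lintegral_congr fun t => ?_
    rw [← ENNReal.ofReal_pow (abs_nonneg _), sq_abs]
  have hfinal : (∫⁻ t in Set.Ioc (0:ℝ) 1, ENNReal.ofReal (h t ^ 2)) ≤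
      ENNReal.ofReal (‖x - z‖ ^ 2) * L := by
    rw [hL_def, ← lintegral_const_mul' _ _ ENNReal.ofReal_ne_top]
    refine lintegral_mono fun t => ?_
    rw [← ENNReal.ofReal_mul (sq_nonneg _)]
    refine ENNReal.ofReal_le_ofReal ?_
    have h1 := habs t
    have : h t ^ 2 = |h t| ^ 2 := (sq_abs _).symm
    rw [this]
    calc |h t| ^ 2 ≤ (g t * ‖x - z‖) ^ 2 := pow_le_pow_left₀ (abs_nonneg _) h1 2
      _ = ‖x - z‖ ^ 2 * g t ^ 2 := by ring
  calc ENNReal.ofReal ((v x - v z) ^ 2) ≤ (ENNReal.ofReal A) ^ 2 := hstep1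
    _ ≤ ∫⁻ t in Set.Ioc (0:ℝ) 1, ENNReal.ofReal (h t ^ 2) := hcs
    _ ≤ ENNReal.ofReal (‖x - z‖ ^ 2) * L := hfinal

lemma cov_cell {ε : ℝ} (hε : 0 < ε) (k : Fin N → ℤ) (g : Euc N → ℝ≥0∞)
    (hg : Measurable g) {c : ℝ} (hc : 1/2 ≤ c) (hc1 : c ≤ 1) {x₀ : Euc N}
    (hx₀ : x₀ ∈ cellOf ε k) :
    ∫⁻ z in cellOf ε k, g (c • z + (1 - c) • x₀) ≤
      (2:ℝ≥0∞) ^ N * ∫⁻ w in cellOf ε k, g w := by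
  have hc0 : (0:ℝ) < c := by linarith
  set φ : Euc N → Euc N := fun z => c • z + (1 - c) • x₀ with hφ_def
  set f' : Euc N →L[ℝ] Euc N := c • ContinuousLinearMap.id ℝ (Euc N) with hf'_def
  have hφ_cont : Continuous φ := by fun_prop
  have hderiv : ∀ z ∈ cellOf ε k, HasFDerivWithinAt φ f' (cellOf ε k) z := by
    intro z _
    have h1 : HasFDerivAt (fun z : Euc N => c • z) f' z := by
      exact (hasFDerivAt_id z).const_smul c
    exact (h1.add_const ((1 - c) • x₀)).hasFDerivWithinAt
  have hinj : Set.InjOn φ (cellOf ε k) := by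
    intro a _ b _ hab
    have h1 : c • a = c • b := by
      have := hab
      simpa [hφ_def] using this
    exact smul_right_injective (Euc N) hc0.ne' h1
  have hdet : f'.det = c ^ N := by
    rw [ContinuousLinearMap.det]
    have : (f' : Euc N →ₗ[ℝ] Euc N) = c • LinearMap.id := by
      ext w
      simp [hf'_def]
    rw [this, LinearMap.det_smul, finrank_euclideanSpace_fin, LinearMap.det_id, mul_one]
  have himg := lintegral_image_eq_lintegral_abs_det_fderiv_mul volume
    (measurableSet_cellOf ε k) hderiv hinj g
  rw [hdet] at himg
  have habs : |c ^ N| = c ^ N := abs_of_pos (pow_pos hc0 N)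
  rw [habs] at himg
  have hsub : φ '' cellOf ε k ⊆ cellOf ε k := by
    rintro - ⟨z, hz, rfl⟩
    exact convex_cellOf k hz hx₀ hc0.le hc1
  have hkey : ENNReal.ofReal (c ^ N) * ∫⁻ z in cellOf ε k, g (φ z) ≤
      ∫⁻ w in cellOf ε k, g w := by
    rw [← lintegral_const_mul' _ _ ENNReal.ofReal_ne_top, ← himg]
    exact lintegral_mono_set hsub
  set b : ℝ≥0∞ := ENNReal.ofReal (c ^ N) with hb_def
  have hb0 : b ≠ 0 := by
    simp [hb_def, ENNReal.ofReal_eq_zero, not_le]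
    positivity
  have hbtop : b ≠ ⊤ := ENNReal.ofReal_ne_top
  have hbinv : b⁻¹ ≤ (2:ℝ≥0∞) ^ N := by
    rw [hb_def, ← ENNReal.ofReal_inv_of_pos (pow_pos hc0 N)]
    calc ENNReal.ofReal ((c ^ N)⁻¹) ≤ ENNReal.ofReal (2 ^ N) := by
          refine ENNReal.ofReal_le_ofReal ?_
          rw [inv_le_comm₀ (pow_pos hc0 N) (by positivity), ← inv_pow]
          exact pow_le_pow_left₀ (by norm_num) (by linarith) N
      _ = (2:ℝ≥0∞) ^ N := by
          rw [ENNReal.ofReal_pow (by norm_num)]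
          norm_num
  calc ∫⁻ z in cellOf ε k, g (φ z)
      = b⁻¹ * (b * ∫⁻ z in cellOf ε k, g (φ z)) := by
        rw [← mul_assoc, ENNReal.inv_mul_cancel hb0 hbtop, one_mul]
    _ ≤ b⁻¹ * ∫⁻ w in cellOf ε k, g w := mul_le_mul_right hkey _
    _ ≤ (2:ℝ≥0∞) ^ N * ∫⁻ w in cellOf ε k, g w := mul_le_mul_left hbinv _

lemma double_cell_bound {ε : ℝ} (hε : 0 < ε) (k : Fin N → ℤ)
    {v : Euc N → ℝ} (hv : Differentiable ℝ v) :
    (∫⁻ x in cellOf ε k, ∫⁻ z in cellOf ε k, ENNReal.ofReal ((v x - v z) ^ 2)) ≤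
      ENNReal.ofReal (N * ε ^ 2) * ((2:ℝ≥0∞) ^ N * (ENNReal.ofReal (ε ^ N) *
        ∫⁻ w in cellOf ε k, ENNReal.ofReal (‖gradient v w‖ ^ 2))) := by
  set Q := cellOf ε k with hQ
  set G : Euc N → ℝ≥0∞ := fun w => ENNReal.ofReal (‖gradient v w‖ ^ 2) with hG
  have hGm : Measurable G := measurable_gradsq v
  have hQm : MeasurableSet Q := measurableSet_cellOf ε k
  set B : ℝ≥0∞ := (2:ℝ≥0∞) ^ N * (ENNReal.ofReal (ε ^ N) * ∫⁻ w in Q, G w) with hB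
  -- pointwise segment bound
  have hpt : ∀ x ∈ Q, ∀ z ∈ Q, ENNReal.ofReal ((v x - v z) ^ 2) ≤
      ENNReal.ofReal (N * ε ^ 2) *
        ∫⁻ t in Set.Ioc (0:ℝ) 1, G (t • x + (1 - t) • z) := by
    intro x hx z hz
    refine (segment_bound hv x z).trans ?_
    exact mul_le_mul_left (ENNReal.ofReal_le_ofReal (sq_norm_sub_le hε k hx hz)) _
  have hstep1 : (∫⁻ x in Q, ∫⁻ z in Q, ENNReal.ofReal ((v x - v z) ^ 2)) ≤
      ENNReal.ofReal (N * ε ^ 2) *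
        ∫⁻ x in Q, ∫⁻ z in Q, ∫⁻ t in Set.Ioc (0:ℝ) 1, G (t • x + (1 - t) • z) := by
    rw [← lintegral_const_mul' _ _ ENNReal.ofReal_ne_top]
    refine setLIntegral_mono' hQm fun x hx => ?_
    rw [← lintegral_const_mul' _ _ ENNReal.ofReal_ne_top]
    exact setLIntegral_mono' hQm fun z hz => hpt x hx z hz
  -- swaps
  have hmap : Continuous fun p : (Euc N × Euc N) × ℝ =>
      p.2 • p.1.1 + (1 - p.2) • p.1.2 := by fun_prop
  have hswap1 : ∀ x : Euc N,
      (∫⁻ z in Q, ∫⁻ t in Set.Ioc (0:ℝ) 1, G (t • x + (1 - t) • z)) =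
        ∫⁻ t in Set.Ioc (0:ℝ) 1, ∫⁻ z in Q, G (t • x + (1 - t) • z) := by
    intro x
    apply lintegral_lintegral_swap
    apply Measurable.aemeasurable
    have : Continuous fun p : Euc N × ℝ => p.2 • x + (1 - p.2) • p.1 := by fun_prop
    exact hGm.comp this.measurable
  set F : Euc N → ℝ → ℝ≥0∞ := fun x t => ∫⁻ z in Q, G (t • x + (1 - t) • z) with hF
  have hFm : Measurable (Function.uncurry F) := by
    apply Measurable.lintegral_prod_right'
      (f := fun (p : (Euc N × ℝ) × Euc N) => G (p.1.2 • p.1.1 + (1 - p.1.2) • p.2))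
    have : Continuous fun p : (Euc N × ℝ) × Euc N =>
        p.1.2 • p.1.1 + (1 - p.1.2) • p.2 := by fun_prop
    exact hGm.comp this.measurable
  have hswap2 : (∫⁻ x in Q, ∫⁻ t in Set.Ioc (0:ℝ) 1, F x t) =
      ∫⁻ t in Set.Ioc (0:ℝ) 1, ∫⁻ x in Q, F x t :=
    lintegral_lintegral_swap hFm.aemeasurable
  -- per-t bound
  have ht : ∀ t ∈ Set.Ioc (0:ℝ) 1, (∫⁻ x in Q, F x t) ≤ B := by
    intro t htmem
    by_cases hhalf : t ≤ 1/2
    · have hb : ∀ x ∈ Q, F x t ≤ (2:ℝ≥0∞) ^ N * ∫⁻ w in Q, G w := by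
        intro x hx
        have hcov := cov_cell hε k G hGm (c := 1 - t)
          (by linarith) (by linarith [htmem.1]) hx
        refine le_trans (le_of_eq ?_) hcov
        refine lintegral_congr fun z => ?_
        congr 1
        rw [add_comm]
        congr 2
        ring
      calc (∫⁻ x in Q, F x t) ≤ ∫⁻ _x in Q, (2:ℝ≥0∞) ^ N * ∫⁻ w in Q, G w :=
            setLIntegral_mono' hQm hb
        _ = ((2:ℝ≥0∞) ^ N * ∫⁻ w in Q, G w) * volume Q := setLIntegral_const _ _
        _ = B := by
            rw [hQ, volume_cellOf hε, hB]
            ring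
    · have hswap3 : (∫⁻ x in Q, F x t) =
          ∫⁻ z in Q, ∫⁻ x in Q, G (t • x + (1 - t) • z) := by
        rw [hF]
        apply lintegral_lintegral_swap
        apply Measurable.aemeasurable
        have : Continuous fun p : Euc N × Euc N => t • p.1 + (1 - t) • p.2 := by fun_prop
        exact hGm.comp this.measurable
      rw [hswap3]
      have hb : ∀ z ∈ Q, (∫⁻ x in Q, G (t • x + (1 - t) • z)) ≤
          (2:ℝ≥0∞) ^ N * ∫⁻ w in Q, G w := by
        intro z hz
        exact cov_cell hε k G hGm (c := t) (by linarith) htmem.2 hz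
      calc (∫⁻ z in Q, ∫⁻ x in Q, G (t • x + (1 - t) • z)) ≤
            ∫⁻ _z in Q, (2:ℝ≥0∞) ^ N * ∫⁻ w in Q, G w := setLIntegral_mono' hQm hb
        _ = ((2:ℝ≥0∞) ^ N * ∫⁻ w in Q, G w) * volume Q := setLIntegral_const _ _
        _ = B := by
            rw [hQ, volume_cellOf hε, hB]
            ring
  -- assemble
  refine hstep1.trans ?_
  refine mul_le_mul_right ?_ _
  calc (∫⁻ x in Q, ∫⁻ z in Q, ∫⁻ t in Set.Ioc (0:ℝ) 1, G (t • x + (1 - t) • z))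
      = ∫⁻ x in Q, ∫⁻ t in Set.Ioc (0:ℝ) 1, F x t := lintegral_congr fun x => hswap1 x
    _ = ∫⁻ t in Set.Ioc (0:ℝ) 1, ∫⁻ x in Q, F x t := hswap2
    _ ≤ ∫⁻ _t in Set.Ioc (0:ℝ) 1, B := setLIntegral_mono' measurableSet_Ioc ht
    _ = B * volume (Set.Ioc (0:ℝ) 1) := setLIntegral_const _ _
    _ = B := by
        rw [Real.volume_Ioc]
        norm_num

lemma cellAvg_bound {ε : ℝ} (hε : 0 < ε) {v : Euc N → ℝ} (hv : Differentiable ℝ v)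
    (x : Euc N) (hvi : IntegrableOn v (cell ε x)) :
    ENNReal.ofReal ((v x - cellAvg ε v x) ^ 2) ≤
      (ENNReal.ofReal (ε ^ N))⁻¹ * ∫⁻ z in cell ε x, ENNReal.ofReal ((v x - v z) ^ 2) := by
  have hvm : Measurable v := hv.continuous.measurable
  have hQvol : volume (cell ε x) = ENNReal.ofReal (ε ^ N) := by
    rw [cell_eq_floor]; exact volume_cellOf hε _
  have hQm : MeasurableSet (cell ε x) := by
    rw [cell_eq_floor]; exact measurableSet_cellOf ε _
  have hεN : (0:ℝ) < ε ^ N := pow_pos hε N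
  have hconst : IntegrableOn (fun _ => v x) (cell ε x) :=
    integrableOn_const (by rw [hQvol]; exact ENNReal.ofReal_ne_top)
  have hfint : IntegrableOn (fun z => v x - v z) (cell ε x) := hconst.sub hvi
  have hdiff : v x - cellAvg ε v x = (ε ^ N)⁻¹ * ∫ z in cell ε x, (v x - v z) := by
    rw [integral_sub hconst hvi, setIntegral_const, measureReal_def, hQvol,
      ENNReal.toReal_ofReal hεN.le, smul_eq_mul]
    unfold cellAvg
    field_simp
  set A : ℝ := ∫ z in cell ε x, |v x - v z| with hA_def
  have hA_nonneg : 0 ≤ A := integral_nonneg fun z => abs_nonneg _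
  have habs : |v x - cellAvg ε v x| ≤ (ε ^ N)⁻¹ * A := by
    rw [hdiff, abs_mul, abs_inv, abs_of_pos hεN]
    refine mul_le_mul_of_nonneg_left ?_ (by positivity)
    calc |∫ z in cell ε x, (v x - v z)| ≤ ∫ z in cell ε x, |v x - v z| := by
          simpa [Real.norm_eq_abs] using
            norm_integral_le_integral_norm (μ := volume.restrict (cell ε x))
              (fun z => v x - v z)
      _ = A := rfl
  set b : ℝ≥0∞ := ENNReal.ofReal (ε ^ N) with hb_def
  have hb0 : b ≠ 0 := by simp [hb_def, ENNReal.ofReal_eq_zero, not_le, hεN]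
  have hbtop : b ≠ ⊤ := ENNReal.ofReal_ne_top
  have hA_lint : ENNReal.ofReal A =
      ∫⁻ z in cell ε x, ENNReal.ofReal (|v x - v z|) :=
    ofReal_integral_eq_lintegral_ofReal hfint.abs (ae_of_all _ fun z => abs_nonneg _)
  have hcs : (ENNReal.ofReal A) ^ 2 ≤
      b * ∫⁻ z in cell ε x, ENNReal.ofReal ((v x - v z) ^ 2) := by
    rw [hA_lint]
    have := lintegral_sq_le (volume.restrict (cell ε x))
      (fun z => ENNReal.ofReal (|v x - v z|))
      ((ENNReal.measurable_ofReal.comp ((measurable_const.sub hvm).abs)).aemeasurable)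
    rw [Measure.restrict_apply_univ, hQvol] at this
    refine this.trans (le_of_eq ?_)
    congr 1
    refine lintegral_congr fun z => ?_
    rw [← ENNReal.ofReal_pow (abs_nonneg _), sq_abs]
  calc ENNReal.ofReal ((v x - cellAvg ε v x) ^ 2)
      = (ENNReal.ofReal (|v x - cellAvg ε v x|)) ^ 2 := by
        rw [← ENNReal.ofReal_pow (abs_nonneg _), sq_abs]
    _ ≤ (ENNReal.ofReal ((ε ^ N)⁻¹ * A)) ^ 2 :=
        pow_le_pow_left₀ (by positivity) (ENNReal.ofReal_le_ofReal habs) 2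
    _ = (b⁻¹ * ENNReal.ofReal A) ^ 2 := by
        rw [ENNReal.ofReal_mul (by positivity), ENNReal.ofReal_inv_of_pos hεN, hb_def]
    _ = b⁻¹ * b⁻¹ * (ENNReal.ofReal A) ^ 2 := by ring
    _ ≤ b⁻¹ * b⁻¹ * (b * ∫⁻ z in cell ε x, ENNReal.ofReal ((v x - v z) ^ 2)) :=
        mul_le_mul_right hcs _
    _ = (b⁻¹ * b) * (b⁻¹ * ∫⁻ z in cell ε x, ENNReal.ofReal ((v x - v z) ^ 2)) := by ring
    _ = b⁻¹ * ∫⁻ z in cell ε x, ENNReal.ofReal ((v x - v z) ^ 2) := by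
        rw [ENNReal.inv_mul_cancel hb0 hbtop, one_mul]

lemma unfold_bound {ε : ℝ} (hε : 0 < ε) {v : Euc N → ℝ} (hv : Differentiable ℝ v)
    (x : Euc N) :
    (∫⁻ y in unitCell N, ENNReal.ofReal ((v x - unfoldOp ε v x y) ^ 2)) ≤
      (ENNReal.ofReal (ε ^ N))⁻¹ * ∫⁻ z in cell ε x, ENNReal.ofReal ((v x - v z) ^ 2) := by
  set g : Euc N → ℝ≥0∞ := fun z => ENNReal.ofReal ((v x - v z) ^ 2) with hg_def
  have hvm : Measurable v := hv.continuous.measurable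
  have hgm : Measurable g :=
    ENNReal.measurable_ofReal.comp (((measurable_const.sub hvm)).pow_const 2)
  set a : Euc N := vec (fun i => ε * (⌊x i / ε⌋ : ℝ)) with ha_def
  set ψ : Euc N → Euc N := fun y => ε • y + a with hψ_def
  have hunfold : ∀ y, unfoldOp ε v x y = v (ψ y) := by
    intro y
    unfold unfoldOp
    congr 1
    ext i
    show ε * (⌊x i / ε⌋ : ℝ) + ε * y i = ε * y i + ε * (⌊x i / ε⌋ : ℝ)
    ring
  set f' : Euc N →L[ℝ] Euc N := ε • ContinuousLinearMap.id ℝ (Euc N) with hf'_def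
  have hderiv : ∀ y ∈ unitCell N, HasFDerivWithinAt ψ f' (unitCell N) y := by
    intro y _
    have h1 : HasFDerivAt (fun y : Euc N => ε • y) f' y := by
      exact (hasFDerivAt_id y).const_smul ε
    exact (h1.add_const a).hasFDerivWithinAt
  have hinj : Set.InjOn ψ (unitCell N) := by
    intro p _ q _ hpq
    have h1 : ε • p = ε • q := by simpa [hψ_def] using hpq
    exact smul_right_injective (Euc N) hε.ne' h1
  have hdet : f'.det = ε ^ N := by
    rw [ContinuousLinearMap.det]
    have : (f' : Euc N →ₗ[ℝ] Euc N) = ε • LinearMap.id := by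
      ext w; simp [hf'_def]
    rw [this, LinearMap.det_smul, finrank_euclideanSpace_fin, LinearMap.det_id, mul_one]
  have himg := lintegral_image_eq_lintegral_abs_det_fderiv_mul volume
    measurableSet_unitCell hderiv hinj g
  rw [hdet, abs_of_pos (pow_pos hε N)] at himg
  have hsub : ψ '' unitCell N ⊆ cell ε x := by
    rintro - ⟨y, hy, rfl⟩
    intro i
    have hyi := hy i
    have : (ψ y) i = ε * y i + ε * (⌊x i / ε⌋ : ℝ) := rfl
    rw [this]
    constructor
    · nlinarith [hyi.1]
    · nlinarith [hyi.2]
  have hkey : ENNReal.ofReal (ε ^ N) * ∫⁻ y in unitCell N, g (ψ y) ≤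
      ∫⁻ z in cell ε x, g z := by
    rw [← lintegral_const_mul' _ _ ENNReal.ofReal_ne_top, ← himg]
    exact lintegral_mono_set hsub
  set b : ℝ≥0∞ := ENNReal.ofReal (ε ^ N) with hb_def
  have hb0 : b ≠ 0 := by simp [hb_def, ENNReal.ofReal_eq_zero, not_le, pow_pos hε N]
  have hbtop : b ≠ ⊤ := ENNReal.ofReal_ne_top
  calc (∫⁻ y in unitCell N, ENNReal.ofReal ((v x - unfoldOp ε v x y) ^ 2))
      = ∫⁻ y in unitCell N, g (ψ y) := by
        refine lintegral_congr fun y => ?_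
        rw [hunfold y]
    _ = b⁻¹ * (b * ∫⁻ y in unitCell N, g (ψ y)) := by
        rw [← mul_assoc, ENNReal.inv_mul_cancel hb0 hbtop, one_mul]
    _ ≤ b⁻¹ * ∫⁻ z in cell ε x, g z := mul_le_mul_right hkey _

lemma cell_subset_bigCell {ε : ℝ} (hε : 0 < ε) {Ω : Set (Euc N)} {x : Euc N} (hx : x ∈ Ω) :
    cell ε x ⊆ bigCell ε Ω := by
  intro y hy
  have hxc : x ∈ cellOf ε (fun i => ⌊x i / ε⌋) := mem_cellOf_floor hε x
  have hyc : y ∈ cellOf ε (fun i => ⌊x i / ε⌋) := by rwa [cell_eq_floor] at hy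
  show (cell ε y ∩ Ω).Nonempty
  rw [cell_eq_cellOf hε hyc]
  exact ⟨x, hxc, hx⟩

lemma bigCell_eq_iUnion {ε : ℝ} (hε : 0 < ε) (Ω : Set (Euc N)) :
    bigCell ε Ω = ⋃ k : {k : Fin N → ℤ // (cellOf ε k ∩ Ω).Nonempty}, cellOf ε k.1 := by
  ext x
  simp only [Set.mem_iUnion]
  constructor
  · intro hx
    refine ⟨⟨fun i => ⌊x i / ε⌋, ?_⟩, mem_cellOf_floor hε x⟩
    rwa [← cell_eq_floor]
  · rintro ⟨⟨k, hk⟩, hxk⟩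
    show (cell ε x ∩ Ω).Nonempty
    rwa [cell_eq_cellOf hε hxk]

lemma measurableSet_bigCell {ε : ℝ} (hε : 0 < ε) (Ω : Set (Euc N)) :
    MeasurableSet (bigCell ε Ω) := by
  rw [bigCell_eq_iUnion hε]
  exact MeasurableSet.iUnion fun k => measurableSet_cellOf ε k.1

lemma volume_bigCell_lt_top {ε : ℝ} (hε : 0 < ε) (hε1 : ε ≤ 1) {Ω : Set (Euc N)}
    (hΩb : Bornology.IsBounded Ω) : volume (bigCell ε Ω) < ⊤ := by
  obtain ⟨R, hR⟩ := hΩb.subset_closedBall 0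
  have hsub : bigCell ε Ω ⊆ Metric.closedBall 0 (R + N) := by
    intro x hx
    obtain ⟨y, hyc, hyΩ⟩ := hx
    have hxc : x ∈ cellOf ε (fun i => ⌊x i / ε⌋) := mem_cellOf_floor hε x
    have hyc' : y ∈ cellOf ε (fun i => ⌊x i / ε⌋) := by rwa [cell_eq_floor] at hyc
    have hdist : ‖x - y‖ ^ 2 ≤ N * ε ^ 2 := sq_norm_sub_le hε _ hxc hyc'
    have hε2 : ε ^ 2 ≤ 1 := by nlinarith
    have h2 : ‖x - y‖ ^ 2 ≤ (N:ℝ) := by nlinarith [Nat.cast_nonneg (α := ℝ) N]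
    have hxy : ‖x - y‖ ≤ N := by
      rcases Nat.eq_zero_or_pos N with h0 | hpos
      · subst h0
        simp only [Nat.cast_zero] at h2 ⊢
        nlinarith [norm_nonneg (x - y)]
      · have hN1 : (1:ℝ) ≤ N := by exact_mod_cast hpos
        nlinarith [norm_nonneg (x - y)]
    have hy : ‖y‖ ≤ R := by simpa using hR hyΩ
    simp only [Metric.mem_closedBall, dist_zero_right]
    calc ‖x‖ = ‖y + (x - y)‖ := by
          congr 1
          abel
      _ ≤ ‖y‖ + ‖x - y‖ := norm_add_le _ _
      _ ≤ R + N := add_le_add hy hxy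
  exact lt_of_le_of_lt (measure_mono hsub) (MeasureTheory.measure_closedBall_lt_top)

lemma sum_over_cells {ε : ℝ} (hε : 0 < ε) {Ω : Set (Euc N)} (hΩm : MeasurableSet Ω)
    {v : Euc N → ℝ} (hv : Differentiable ℝ v) :
    (∫⁻ x in Ω, (ENNReal.ofReal (ε ^ N))⁻¹ *
        ∫⁻ z in cell ε x, ENNReal.ofReal ((v x - v z) ^ 2)) ≤
      ENNReal.ofReal (N * ε ^ 2) * (2:ℝ≥0∞) ^ N *
        ∫⁻ w in bigCell ε Ω, ENNReal.ofReal (‖gradient v w‖ ^ 2) := by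
  set G : Euc N → ℝ≥0∞ := fun w => ENNReal.ofReal (‖gradient v w‖ ^ 2) with hG
  set f : Euc N → ℝ≥0∞ := fun x => (ENNReal.ofReal (ε ^ N))⁻¹ *
    ∫⁻ z in cell ε x, ENNReal.ofReal ((v x - v z) ^ 2) with hf
  set c : ℝ≥0∞ := ENNReal.ofReal (N * ε ^ 2) * (2:ℝ≥0∞) ^ N with hc
  set b : ℝ≥0∞ := ENNReal.ofReal (ε ^ N) with hb_def
  have hb0 : b ≠ 0 := by simp [hb_def, ENNReal.ofReal_eq_zero, not_le, pow_pos hε N]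
  have hbtop : b ≠ ⊤ := ENNReal.ofReal_ne_top
  have hΩdecomp : Ω = ⋃ k : Fin N → ℤ, (cellOf ε k ∩ Ω) := by
    rw [← Set.iUnion_inter, iUnion_cellOf hε, Set.univ_inter]
  have hdisj : Pairwise (Function.onFun Disjoint fun k : Fin N → ℤ => cellOf ε k ∩ Ω) :=
    fun k k' hne => (pairwise_disjoint_cellOf hε hne).mono
      Set.inter_subset_left Set.inter_subset_left
  have hdisj' : Pairwise (Function.onFun Disjoint
      fun k : Fin N → ℤ => cellOf ε k ∩ bigCell ε Ω) :=
    fun k k' hne => (pairwise_disjoint_cellOf hε hne).mono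
      Set.inter_subset_left Set.inter_subset_left
  have hmeas : ∀ k : Fin N → ℤ, MeasurableSet (cellOf ε k ∩ Ω) :=
    fun k => (measurableSet_cellOf ε k).inter hΩm
  have hmeas' : ∀ k : Fin N → ℤ, MeasurableSet (cellOf ε k ∩ bigCell ε Ω) :=
    fun k => (measurableSet_cellOf ε k).inter (measurableSet_bigCell hε Ω)
  have hdec1 : (∫⁻ x in Ω, f x) = ∑' k : Fin N → ℤ, ∫⁻ x in cellOf ε k ∩ Ω, f x := by
    conv_lhs => rw [hΩdecomp]
    exact lintegral_iUnion hmeas hdisj f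
  have hk : ∀ k : Fin N → ℤ, (∫⁻ x in cellOf ε k ∩ Ω, f x) ≤
      c * ∫⁻ w in cellOf ε k ∩ bigCell ε Ω, G w := by
    intro k
    rcases Set.eq_empty_or_nonempty (cellOf ε k ∩ Ω) with hemp | hne
    · rw [hemp]
      simp
    · have hsub : cellOf ε k ⊆ bigCell ε Ω := by
        intro y hy
        show (cell ε y ∩ Ω).Nonempty
        rwa [cell_eq_cellOf hε hy]
      have h1 : cellOf ε k ∩ bigCell ε Ω = cellOf ε k := Set.inter_eq_left.2 hsub
      rw [h1]
      have hfx : ∀ x ∈ cellOf ε k ∩ Ω, f x =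
          b⁻¹ * ∫⁻ z in cellOf ε k, ENNReal.ofReal ((v x - v z) ^ 2) := by
        intro x hx
        rw [hf]
        simp only
        rw [cell_eq_cellOf hε hx.1]
      calc (∫⁻ x in cellOf ε k ∩ Ω, f x)
          = ∫⁻ x in cellOf ε k ∩ Ω,
              b⁻¹ * ∫⁻ z in cellOf ε k, ENNReal.ofReal ((v x - v z) ^ 2) := by
            refine setLIntegral_congr_fun (hmeas k) hfx
        _ ≤ ∫⁻ x in cellOf ε k,
              b⁻¹ * ∫⁻ z in cellOf ε k, ENNReal.ofReal ((v x - v z) ^ 2) :=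
            lintegral_mono_set Set.inter_subset_left
        _ = b⁻¹ * ∫⁻ x in cellOf ε k,
              ∫⁻ z in cellOf ε k, ENNReal.ofReal ((v x - v z) ^ 2) :=
            lintegral_const_mul' _ _ (ENNReal.inv_ne_top.2 hb0)
        _ ≤ b⁻¹ * (ENNReal.ofReal (N * ε ^ 2) * ((2:ℝ≥0∞) ^ N *
              (b * ∫⁻ w in cellOf ε k, G w))) :=
            mul_le_mul_right (double_cell_bound hε k hv) _
        _ = (b⁻¹ * b) * (c * ∫⁻ w in cellOf ε k, G w) := by
            rw [hc]
            ring
        _ = c * ∫⁻ w in cellOf ε k, G w := by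
            rw [ENNReal.inv_mul_cancel hb0 hbtop, one_mul]
  have hdec2 : (∑' k : Fin N → ℤ, ∫⁻ w in cellOf ε k ∩ bigCell ε Ω, G w) =
      ∫⁻ w in bigCell ε Ω, G w := by
    rw [← lintegral_iUnion hmeas' hdisj' G]
    congr 1
    rw [← Set.iUnion_inter, iUnion_cellOf hε, Set.univ_inter]
  calc (∫⁻ x in Ω, f x) = ∑' k : Fin N → ℤ, ∫⁻ x in cellOf ε k ∩ Ω, f x := hdec1
    _ ≤ ∑' k : Fin N → ℤ, c * ∫⁻ w in cellOf ε k ∩ bigCell ε Ω, G w :=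
        ENNReal.tsum_le_tsum hk
    _ = c * ∑' k : Fin N → ℤ, ∫⁻ w in cellOf ε k ∩ bigCell ε Ω, G w :=
        ENNReal.tsum_mul_left
    _ = c * ∫⁻ w in bigCell ε Ω, G w := by rw [hdec2]

end S13

/-- ‖v − M^ε_Y(v)‖_{L²(Ω)} ≤ Cε‖∇v‖ and ‖v − 𝒯_ε(v)‖_{L²(Ω×Y)} ≤ Cε‖∇v‖
(stated with squared norms). -/
theorem stmt13 (N : ℕ) (hN : 1 ≤ N)
    (Ω : Set (Euc N)) (hΩo : IsOpen Ω) (hΩb : Bornology.IsBounded Ω)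
    (K : ℝ) (hK : 0 < K) :
    ∃ C > 0, ∀ ε ∈ Set.Ioc (0:ℝ) 1, ∀ v : Euc N → ℝ, Differentiable ℝ v →
      MemLp v 2 (volume.restrict (bigCell ε Ω)) →
      MemLp (fun x => ‖gradient v x‖) 2 (volume.restrict (bigCell ε Ω)) →
      -- v is extended to Ω̃_ε by a uniformly bounded extension operator
      (∫ x in bigCell ε Ω, ‖gradient v x‖ ^ 2) ≤ K * ∫ x in Ω, ‖gradient v x‖ ^ 2 →
      ((∫ x in Ω, (v x - cellAvg ε v x) ^ 2) ≤
        C * ε ^ 2 * ∫ x in Ω, ‖gradient v x‖ ^ 2) ∧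
      ((∫ x in Ω, ∫ y in unitCell N, (v x - unfoldOp ε v x y) ^ 2) ≤
        C * ε ^ 2 * ∫ x in Ω, ‖gradient v x‖ ^ 2) := by
  refine ⟨((N:ℝ) * 2 ^ N + 1) * K, by positivity, ?_⟩
  rintro ε ⟨hε, hε1⟩ v hv hvL2 hgL2 hext
  have hC0 : (0:ℝ) ≤ ((N:ℝ) * 2 ^ N + 1) * K := by positivity
  have hΩm : MeasurableSet Ω := hΩo.measurableSet
  set I : ℝ := ∫ x in Ω, ‖gradient v x‖ ^ 2 with hI
  have hgradnn : (0:ℝ) ≤ I := integral_nonneg fun x => sq_nonneg _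
  have hRHS0 : (0:ℝ) ≤ ((N:ℝ) * 2 ^ N + 1) * K * ε ^ 2 * I :=
    mul_nonneg (mul_nonneg hC0 (sq_nonneg ε)) hgradnn
  have hfin : volume (bigCell ε Ω) < ⊤ := S13.volume_bigCell_lt_top hε hε1 hΩb
  haveI : IsFiniteMeasure (volume.restrict (bigCell ε Ω)) :=
    ⟨by rwa [Measure.restrict_apply_univ]⟩
  have hvint : IntegrableOn v (bigCell ε Ω) := hvL2.integrable one_le_two
  set G : Euc N → ℝ≥0∞ := fun w => ENNReal.ofReal (‖gradient v w‖ ^ 2) with hG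
  have hGsq_int : Integrable (fun w => ‖gradient v w‖ ^ 2)
      (volume.restrict (bigCell ε Ω)) := by
    simpa using hgL2.integrable_sq
  have hFG_lt : (∫⁻ w in bigCell ε Ω, G w) < ⊤ := by
    have h := hGsq_int.hasFiniteIntegral
    rw [hasFiniteIntegral_iff_norm] at h
    refine lt_of_le_of_lt (le_of_eq (lintegral_congr fun w => ?_)) h
    rw [hG]
    simp only
    rw [Real.norm_eq_abs, abs_of_nonneg (sq_nonneg _)]
  have hFG_toReal : (∫⁻ w in bigCell ε Ω, G w).toReal =
      ∫ w in bigCell ε Ω, ‖gradient v w‖ ^ 2 := by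
    rw [integral_eq_lintegral_of_nonneg_ae (ae_of_all _ fun w => sq_nonneg _) hGsq_int.1]
  set M : ℝ≥0∞ := ENNReal.ofReal (N * ε ^ 2) * (2:ℝ≥0∞) ^ N *
    ∫⁻ w in bigCell ε Ω, G w with hM
  have hM_ne : M ≠ ⊤ := by
    rw [hM]
    exact ENNReal.mul_ne_top
      (ENNReal.mul_ne_top ENNReal.ofReal_ne_top
        (ENNReal.pow_ne_top (by norm_num))) hFG_lt.ne
  have hM_toReal : M.toReal ≤ ((N:ℝ) * 2 ^ N + 1) * K * ε ^ 2 * I := by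
    rw [hM, ENNReal.toReal_mul, ENNReal.toReal_mul, hFG_toReal,
      ENNReal.toReal_ofReal (by positivity)]
    have h2N : ((2:ℝ≥0∞) ^ N).toReal = 2 ^ N := by
      rw [ENNReal.toReal_pow]
      norm_num
    rw [h2N]
    have hstep : (N:ℝ) * ε ^ 2 * 2 ^ N * ∫ w in bigCell ε Ω, ‖gradient v w‖ ^ 2 ≤
        (N:ℝ) * ε ^ 2 * 2 ^ N * (K * I) :=
      mul_le_mul_of_nonneg_left hext (by positivity)
    refine hstep.trans ?_
    have h1 : (0:ℝ) ≤ K * ε ^ 2 * I := by positivity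
    nlinarith [mul_nonneg (mul_nonneg hK.le (sq_nonneg ε)) hgradnn]
  have hcore := S13.sum_over_cells hε hΩm hv (Ω := Ω)
  constructor
  · by_cases hint : Integrable (fun x => (v x - cellAvg ε v x) ^ 2) (volume.restrict Ω)
    · rw [integral_eq_lintegral_of_nonneg_ae (ae_of_all _ fun x => sq_nonneg _) hint.1]
      have hle : (∫⁻ x in Ω, ENNReal.ofReal ((v x - cellAvg ε v x) ^ 2)) ≤ M := by
        refine le_trans ?_ hcore
        refine setLIntegral_mono' hΩm fun x hx => ?_
        exact S13.cellAvg_bound hε hv x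
          (hvint.mono_set (S13.cell_subset_bigCell hε hx))
      exact le_trans (ENNReal.toReal_mono hM_ne hle) hM_toReal
    · rw [integral_undef hint]
      exact hRHS0
  · by_cases hint : Integrable
        (fun x => ∫ y in unitCell N, (v x - unfoldOp ε v x y) ^ 2) (volume.restrict Ω)
    · rw [integral_eq_lintegral_of_nonneg_ae
        (ae_of_all _ fun x => integral_nonneg fun y => sq_nonneg _) hint.1]
      have hle : (∫⁻ x in Ω, ENNReal.ofReal
          (∫ y in unitCell N, (v x - unfoldOp ε v x y) ^ 2)) ≤ M := by
        refine le_trans ?_ hcore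
        refine setLIntegral_mono' hΩm fun x hx => ?_
        have hcont : Continuous fun y : Euc N => (v x - unfoldOp ε v x y) ^ 2 := by
          have ha : Continuous fun y : Euc N =>
              (ε • y + vec (fun i => ε * (⌊x i / ε⌋ : ℝ)) : Euc N) :=
            (continuous_id.const_smul ε).add continuous_const
          have hunf : (fun y : Euc N => unfoldOp ε v x y) =
              fun y => v (ε • y + vec (fun i => ε * (⌊x i / ε⌋ : ℝ))) := by
            funext y
            unfold unfoldOp
            congr 1
            ext i
            show ε * (⌊x i / ε⌋ : ℝ) + ε * y i = ε * y i + ε * (⌊x i / ε⌋ : ℝ)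
            ring
          have : Continuous fun y : Euc N => unfoldOp ε v x y := by
            rw [hunf]
            exact hv.continuous.comp ha
          fun_prop
        have hinner_eq : ∫ y in unitCell N, (v x - unfoldOp ε v x y) ^ 2 =
            (∫⁻ y in unitCell N,
              ENNReal.ofReal ((v x - unfoldOp ε v x y) ^ 2)).toReal :=
          integral_eq_lintegral_of_nonneg_ae (ae_of_all _ fun y => sq_nonneg _)
            hcont.aestronglyMeasurable
        rw [hinner_eq]
        exact le_trans ENNReal.ofReal_toReal_le (S13.unfold_bound hε hv x)
      exact le_trans (ENNReal.toReal_mono hM_ne hle) hM_toReal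
    · rw [integral_undef hint]
      exact hRHS0
end
end
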